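/- arXiv:1804.04724 — 2 statements merged into one kernel-verified Lean document; each statement's English description precedes it below -/
import Mathlib

section
/- The digraph associated to a lattice diagram has no directed cycles if and only if it has no directed 4-cycles. -/
/-- A lattice diagram: a subgraph of the grid graph on `ℤ²` (adjacency only
between lattice points at distance 1) in which every vertex incident to an
edge has degree 2 or 4, together with over/under information at each
degree-4 vertex (crossing): `horizOver v = true` means the horizontal strand
through `v` is the overstrand. -/
structure LatticeDiagram where
  Adj : (ℤ × ℤ) → (ℤ × ℤ) → Prop
  symm : ∀ p q, Adj p q → Adj q p
  unit : ∀ p q, Adj p q → (p.1 - q.1) ^ 2 + (p.2 - q.2) ^ 2 = 1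
  deg : ∀ p q, Adj p q → {r | Adj p r}.ncard = 2 ∨ {r | Adj p r}.ncard = 4
  horizOver : (ℤ × ℤ) → Bool

/-- A crossing of a lattice diagram: a vertex of degree 4. -/
def LatticeDiagram.IsCrossing (D : LatticeDiagram) (v : ℤ × ℤ) : Prop :=
  {r | D.Adj v r}.ncard = 4

/-- The edge of `D` from `v` to `p` is an understrand at the crossing `v`. -/
def LatticeDiagram.UnderAt (D : LatticeDiagram) (v p : ℤ × ℤ) : Prop :=
  D.Adj v p ∧ ((p.2 = v.2 ∧ D.horizOver v = false) ∨ (p.1 = v.1 ∧ D.horizOver v = true))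

/-- The edge of `D` from `v` to `p` is an overstrand at the crossing `v`. -/
def LatticeDiagram.OverAt (D : LatticeDiagram) (v p : ℤ × ℤ) : Prop :=
  D.Adj v p ∧ ((p.2 = v.2 ∧ D.horizOver v = true) ∨ (p.1 = v.1 ∧ D.horizOver v = false))

/-- The associated digraph `Γ` of a lattice diagram `D`: its vertices are the
edges of `D` (as unordered pairs), with a directed edge `e → f` whenever `e`
and `f` meet at a crossing `v` of `D` with `e` the understrand and `f` the
overstrand at `v`. -/
def GammaEdge (D : LatticeDiagram) (e f : Sym2 (ℤ × ℤ)) : Prop :=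
  ∃ v p q : ℤ × ℤ, D.IsCrossing v ∧ D.UnderAt v p ∧ D.OverAt v q ∧
    e = s(v, p) ∧ f = s(v, q)

/-- A directed cycle: a nonempty cyclic sequence of distinct vertices each
joined to the next by a directed edge. -/
def HasDirectedCycle {V : Type*} (E : V → V → Prop) : Prop :=
  ∃ (n : ℕ) (c : Fin (n + 1) → V), Function.Injective c ∧ ∀ i, E (c i) (c (i + 1))

/-- A directed 4-cycle. -/
def Has4Cycle {V : Type*} (E : V → V → Prop) : Prop :=
  ∃ c : Fin 4 → V, Function.Injective c ∧ ∀ i, E (c i) (c (i + 1))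

/-- An Escher square in a lattice diagram: a unit 4-cycle `v₁v₂v₃v₄` of edges
of `D` such that, up to reversing all four crossings, every edge `vᵢvᵢ₊₁` is
an understrand at `vᵢ` and an overstrand at `vᵢ₊₁` (indices mod 4). -/
def EscherSquare (D : LatticeDiagram) : Prop :=
  ∃ v : Fin 4 → ℤ × ℤ, Function.Injective v ∧ (∀ i, D.Adj (v i) (v (i + 1))) ∧
    ((∀ i, D.UnderAt (v i) (v (i + 1)) ∧ D.OverAt (v (i + 1)) (v i)) ∨
     (∀ i, D.OverAt (v i) (v (i + 1)) ∧ D.UnderAt (v (i + 1)) (v i)))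

/-- A lattice link: a subgraph of the grid graph on `ℤ³ = (ℤ × ℤ) × ℤ`
(adjacency only between lattice points at distance 1) in which every vertex
incident to an edge has degree exactly 2, i.e. a disjoint union of cycles.
A point is recorded as `(xy, z)` with `xy : ℤ × ℤ` its projection and `z` its
height; the projection `π` is `(xy, z) ↦ xy`. -/
structure LatticeLink where
  Adj : ((ℤ × ℤ) × ℤ) → ((ℤ × ℤ) × ℤ) → Prop
  symm : ∀ p q, Adj p q → Adj q p
  unit : ∀ p q, Adj p q →
    (p.1.1 - q.1.1) ^ 2 + (p.1.2 - q.1.2) ^ 2 + (p.2 - q.2) ^ 2 = 1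
  deg2 : ∀ p q, Adj p q → {r | Adj p r}.ncard = 2

/-- A point of `ℤ³` lying on the link `L`. -/
def LatticeLink.Vtx (L : LatticeLink) (p : (ℤ × ℤ) × ℤ) : Prop := ∃ q, L.Adj p q

/-- Two heights `h, h'` lie in the same connected component of the preimage
`π⁻¹(v) ∩ L` of the vertex `v` of the diagram. -/
def FiberConn (L : LatticeLink) (v : ℤ × ℤ) (h h' : ℤ) : Prop :=
  Relation.ReflTransGen (fun a b => L.Adj (v, a) (v, b)) h h'

/-- `L` realizes `D` as in Definition 1.1: `π(L) = D`, the preimage of (the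
interior of) each edge of `D` is a single edge of `L` at a single height, the
preimage of each degree-2 vertex is connected, and the preimage of each
crossing has exactly two connected components, each point of the higher
component lying strictly above each point of the lower one, with the higher
component attached to the lifts of the two overstrands and the lower one to
the lifts of the two understrands. -/
def Realizes (D : LatticeDiagram) (L : LatticeLink) : Prop :=
  -- every edge of L is vertical (over a vertex of D) or projects to an edge of D
  (∀ p q, L.Adj p q → (p.1 = q.1 ∧ ∃ r, D.Adj p.1 r) ∨ D.Adj p.1 q.1) ∧
  -- each edge of D has exactly one lift
  (∀ a b, D.Adj a b → ∃! h : ℤ, L.Adj (a, h) (b, h)) ∧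
  -- the preimage of a degree-2 vertex is connected
  (∀ v : ℤ × ℤ, (∃ r, D.Adj v r) → ¬ D.IsCrossing v →
    ∀ h h', L.Vtx (v, h) → L.Vtx (v, h') → FiberConn L v h h') ∧
  -- the preimage of a crossing has exactly two components, the higher one
  -- attached to the lifts of the overstrands
  (∀ v : ℤ × ℤ, D.IsCrossing v → ∃ hu ho : ℤ,
    L.Vtx (v, hu) ∧ L.Vtx (v, ho) ∧ ¬ FiberConn L v hu ho ∧
    (∀ h, L.Vtx (v, h) → FiberConn L v h hu ∨ FiberConn L v h ho) ∧
    (∀ h h', FiberConn L v hu h → FiberConn L v ho h' → h < h') ∧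
    (∀ (p : ℤ × ℤ) (h : ℤ), L.Adj (v, h) (p, h) →
      (D.OverAt v p → FiberConn L v h ho) ∧ (D.UnderAt v p → FiberConn L v h hu)))

/-- A lattice diagram is realizable if some lattice link realizes it. -/
def Realizable (D : LatticeDiagram) : Prop := ∃ L : LatticeLink, Realizes D L


/-!
Every arrow `e → f` of `Γ` sits at a crossing `v` where `e` is the understrand and `f` the
overstrand, so a directed cycle of `Γ` is a closed walk through crossings of `D` that leaves
each crossing along its overstrand and enters the next one along its understrand. At the
lexicographically largest vertex `(x, y)` of such a walk, the walk must arrive from and leave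
towards `(x - 1, y)` and `(x, y - 1)`, one along each strand. Up to mirroring the diagram and
reversing the walk, it arrives from `(x - 1, y)`; then the crossing types at `(x, y - 1)` and
at the next vertex of the walk, which maximality forces to be `(x - 1, y - 1)`, close the
unit square into a walk of length four, whose edges form a directed 4-cycle of `Γ`.
-/

theorem Int.sq_add_sq_eq_one {a b : ℤ} (h : a ^ 2 + b ^ 2 = 1) :
    (a = 0 ∧ (b = 1 ∨ b = -1)) ∨ (b = 0 ∧ (a = 1 ∨ a = -1)) := by
  have ha1 : -1 ≤ a := by nlinarith [sq_nonneg b, sq_nonneg (a + 1)]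
  have ha2 : a ≤ 1 := by nlinarith [sq_nonneg b, sq_nonneg (a - 1)]
  have hb1 : -1 ≤ b := by nlinarith [sq_nonneg a, sq_nonneg (b + 1)]
  have hb2 : b ≤ 1 := by nlinarith [sq_nonneg a, sq_nonneg (b - 1)]
  interval_cases a <;> interval_cases b <;> simp_all

theorem Has4Cycle.of_swap {V : Type*} {E : V → V → Prop} (h : Has4Cycle fun x y => E y x) :
    Has4Cycle E := by
  obtain ⟨c, hc, hE⟩ := h
  refine ⟨fun i => c (-i), hc.comp neg_injective, fun i => ?_⟩
  have h := hE (-(i + 1))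
  rw [neg_add', sub_add_cancel] at h
  simpa only [neg_add'] using h

theorem injective_sym2_mk_succ {α : Type*} {p : Fin 4 → α} (hp : Function.Injective p) :
    Function.Injective fun i => s(p i, p (i + 1)) := by
  intro i j h
  fin_cases i <;> fin_cases j <;> simp [hp.eq_iff] at h ⊢

namespace LatticeDiagram

variable {D : LatticeDiagram} {v p : ℤ × ℤ}

theorem adj_cases (h : D.Adj v p) :
    (p.1 = v.1 ∧ (p.2 = v.2 + 1 ∨ p.2 = v.2 - 1)) ∨
      (p.2 = v.2 ∧ (p.1 = v.1 + 1 ∨ p.1 = v.1 - 1)) := by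
  rcases Int.sq_add_sq_eq_one (D.unit v p h) with ⟨h1, h2 | h2⟩ | ⟨h1, h2 | h2⟩ <;> omega

theorem IsCrossing.adj (h : D.IsCrossing v) (hp : (v.1 - p.1) ^ 2 + (v.2 - p.2) ^ 2 = 1) :
    D.Adj v p := by
  let N : Finset (ℤ × ℤ) := {(v.1 + 1, v.2), (v.1 - 1, v.2), (v.1, v.2 + 1), (v.1, v.2 - 1)}
  have mem_N : ∀ r : ℤ × ℤ, (v.1 - r.1) ^ 2 + (v.2 - r.2) ^ 2 = 1 → r ∈ N := by
    intro r hr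
    rcases Int.sq_add_sq_eq_one hr with ⟨h1, h2 | h2⟩ | ⟨h1, h2 | h2⟩ <;>
      simp only [N, Finset.mem_insert, Finset.mem_singleton, Prod.ext_iff] <;> omega
  have hN : {r | D.Adj v r} = N :=
    Set.eq_of_subset_of_ncard_le (fun r hr => mem_N r (D.unit v r hr))
      (by rw [h, Set.ncard_coe_finset]; exact Finset.card_le_four) N.finite_toSet
  show p ∈ {r | D.Adj v r}
  exact hN ▸ mem_N p hp

theorem UnderAt.snd_eq_iff (h : D.UnderAt v p) : p.2 = v.2 ↔ D.horizOver v = false := by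
  obtain ⟨hadj, h⟩ := h
  have hp := adj_cases hadj
  cases hb : D.horizOver v <;> simp [hb] at h ⊢ <;> omega

theorem UnderAt.fst_eq_iff (h : D.UnderAt v p) : p.1 = v.1 ↔ D.horizOver v = true := by
  obtain ⟨hadj, h⟩ := h
  have hp := adj_cases hadj
  cases hb : D.horizOver v <;> simp [hb] at h ⊢ <;> omega

theorem OverAt.snd_eq_iff (h : D.OverAt v p) : p.2 = v.2 ↔ D.horizOver v = true := by
  obtain ⟨hadj, h⟩ := h
  have hp := adj_cases hadj
  cases hb : D.horizOver v <;> simp [hb] at h ⊢ <;> omega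

theorem OverAt.fst_eq_iff (h : D.OverAt v p) : p.1 = v.1 ↔ D.horizOver v = false := by
  obtain ⟨hadj, h⟩ := h
  have hp := adj_cases hadj
  cases hb : D.horizOver v <;> simp [hb] at h ⊢ <;> omega

theorem OverAt.not_underAt (h : D.OverAt v p) : ¬ D.UnderAt v p := fun h' => by
  have := h.snd_eq_iff.symm.trans h'.snd_eq_iff
  cases D.horizOver v <;> simp at this

def mirror (D : LatticeDiagram) : LatticeDiagram :=
  { D with horizOver := fun v => !D.horizOver v }

theorem mirror_underAt : D.mirror.UnderAt v p ↔ D.OverAt v p := by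
  simp [mirror, UnderAt, OverAt]

theorem mirror_overAt : D.mirror.OverAt v p ↔ D.UnderAt v p := by
  simp [mirror, UnderAt, OverAt]

structure OverUnderStep (D : LatticeDiagram) (u w : ℤ × ℤ) : Prop where
  isCrossing_src : D.IsCrossing u
  overAt : D.OverAt u w
  isCrossing_tgt : D.IsCrossing w
  underAt : D.UnderAt w u

theorem mirror_overUnderStep : D.mirror.OverUnderStep = fun u w => D.OverUnderStep w u := by
  ext u w
  exact ⟨fun ⟨hu, ho, hw, hu'⟩ => ⟨hw, mirror_underAt.mp hu', hu, mirror_overAt.mp ho⟩,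
    fun ⟨hw, ho, hu, hu'⟩ => ⟨hu, mirror_overAt.mpr hu', hw, mirror_underAt.mpr ho⟩⟩

theorem gammaEdge_of_overUnderStep {u v w : ℤ × ℤ} (huv : D.OverUnderStep u v)
    (hvw : D.OverUnderStep v w) : GammaEdge D s(u, v) s(v, w) :=
  ⟨v, u, w, hvw.isCrossing_src, huv.underAt, hvw.overAt, Sym2.eq_swap, rfl⟩

theorem exists_closed_walk_of_gammaEdge {n : ℕ} {c : Fin (n + 1) → Sym2 (ℤ × ℤ)}
    (hc : ∀ i, GammaEdge D (c i) (c (i + 1))) :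
    ∃ v : Fin (n + 1) → ℤ × ℤ, ∀ i, D.OverUnderStep (v i) (v (i + 1)) := by
  choose v p q hcr hun hov hp hq using hc
  have next : ∀ i, v i = p (i + 1) ∧ q i = v (i + 1) := by
    intro i
    have h := (hq i).symm.trans (hp (i + 1))
    rw [Sym2.eq_iff] at h
    rcases h with ⟨hv, hpq⟩ | h
    · exact absurd (hv ▸ hpq ▸ hun (i + 1)) (hov i).not_underAt
    · exact h
  refine ⟨v, fun i => ⟨hcr i, ?_, hcr (i + 1), ?_⟩⟩
  · exact (next i).2 ▸ hov i
  · exact (next i).1 ▸ hun (i + 1)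

theorem has4Cycle_gammaEdge (h : Has4Cycle D.OverUnderStep) : Has4Cycle (GammaEdge D) := by
  obtain ⟨p, hp, hstep⟩ := h
  exact ⟨fun i => s(p i, p (i + 1)), injective_sym2_mk_succ hp,
    fun i => gammaEdge_of_overUnderStep (hstep i) (hstep (i + 1))⟩

theorem has4Cycle_overUnderStep_of_corner {a v b w : ℤ × ℤ} (hav : D.OverUnderStep a v)
    (hvb : D.OverUnderStep v b) (hbw : D.OverUnderStep b w) (ha : toLex a ≤ toLex v)
    (hb : toLex b ≤ toLex v) (hw : toLex w ≤ toLex v) (hv : D.horizOver v = false) :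
    Has4Cycle D.OverUnderStep := by
  obtain ⟨x, y⟩ := v
  have ha' : a = (x - 1, y) := by
    have h2 : a.2 = y := hav.underAt.snd_eq_iff.mpr hv
    have hadj := adj_cases hav.underAt.1
    have hle := Prod.Lex.toLex_le_toLex.mp ha
    ext <;> simp only at * <;> omega
  subst ha'
  have hb' : b = (x, y - 1) := by
    have h1 : b.1 = x := hvb.overAt.fst_eq_iff.mpr hv
    have hadj := adj_cases hvb.overAt.1
    have hle := Prod.Lex.toLex_le_toLex.mp hb
    ext <;> simp only at * <;> omega
  subst hb'
  have hw' : w = (x - 1, y - 1) := by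
    have h2 : w.2 = y - 1 := hbw.overAt.snd_eq_iff.mpr (hvb.underAt.fst_eq_iff.mp rfl)
    have hadj := adj_cases hbw.overAt.1
    have hle := Prod.Lex.toLex_le_toLex.mp hw
    ext <;> simp only at * <;> omega
  subst hw'
  have hwa : D.OverUnderStep (x - 1, y - 1) (x - 1, y) :=
    ⟨hbw.isCrossing_tgt,
      ⟨hbw.isCrossing_tgt.adj (by ring), Or.inr ⟨rfl, hbw.underAt.snd_eq_iff.mp rfl⟩⟩,
      hav.isCrossing_src,
      ⟨hav.isCrossing_src.adj (by ring), Or.inr ⟨rfl, hav.overAt.snd_eq_iff.mp rfl⟩⟩⟩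
  refine ⟨![(x - 1, y), (x, y), (x, y - 1), (x - 1, y - 1)], ?_, ?_⟩
  · intro i j h
    fin_cases i <;> fin_cases j <;> simp [Prod.ext_iff] at h ⊢ <;> omega
  · intro i
    fin_cases i
    exacts [hav, hvb, hbw, hwa]

theorem has4Cycle_overUnderStep_of_closed_walk {n : ℕ} {v : Fin (n + 1) → ℤ × ℤ}
    (hv : ∀ i, D.OverUnderStep (v i) (v (i + 1))) : Has4Cycle D.OverUnderStep := by
  obtain ⟨i, hmax⟩ := Finite.exists_max fun j => toLex (v j)
  have hprev : ∀ j, D.OverUnderStep (v (j - 1)) (v j) := fun j => by simpa using hv (j - 1)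
  cases hi : D.horizOver (v i) with
  | false =>
    exact has4Cycle_overUnderStep_of_corner (hprev i) (hv i) (hv (i + 1))
      (hmax _) (hmax _) (hmax _) hi
  | true =>
    refine Has4Cycle.of_swap ?_
    rw [← mirror_overUnderStep]
    refine has4Cycle_overUnderStep_of_corner (v := v i) ?_ ?_ ?_ (hmax (i + 1)) (hmax (i - 1))
      (hmax (i - 1 - 1)) (by simp [mirror, hi])
    all_goals rw [mirror_overUnderStep]
    exacts [hv i, hprev i, hprev (i - 1)]

end LatticeDiagram

/-- The digraph associated with a lattice diagram has no directed cycles iff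
it has no directed 4-cycles. -/
theorem stmt_9 (D : LatticeDiagram) :
    ¬ HasDirectedCycle (GammaEdge D) ↔ ¬ Has4Cycle (GammaEdge D) := by
  refine ⟨fun h ⟨c, hc, hE⟩ => h ⟨3, c, hc, hE⟩, fun h ⟨n, c, _, hE⟩ => h ?_⟩
  obtain ⟨v, hv⟩ := LatticeDiagram.exists_closed_walk_of_gammaEdge hE
  exact LatticeDiagram.has4Cycle_gammaEdge
    (LatticeDiagram.has4Cycle_overUnderStep_of_closed_walk hv)
end

section
/- A lattice diagram is realizable as the projection of a lattice link if and only if its associated digraph admits a height function. -/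
/-!
If `L` realizes `D`, record for each edge of `D` the height of its unique lift. At a crossing the
lifts of the understrand edges are attached to the lower fibre component and those of the
overstrand edges to the upper one, so this is a height function.

Conversely, given a height function `ht`, lift every edge `e` of `D` to height `ht e` and, over
every vertex `a`, join the lifts of the two edges of each strand through `a` by a vertical
segment. At a crossing the two segments are disjoint, since `ht` puts both understrand edges
strictly below both overstrand edges. Every point of the resulting link then lies on exactly one
segment, which gives it exactly two neighbours, and the segments are the fibre components.
-/

lemma Int.sq_add_sq_eq_one_iff {x y : ℤ} :
    x ^ 2 + y ^ 2 = 1 ↔ (x = 0 ∧ (y = 1 ∨ y = -1)) ∨ (y = 0 ∧ (x = 1 ∨ x = -1)) := by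
  refine ⟨fun h => ?_, by rintro (⟨rfl, rfl | rfl⟩ | ⟨rfl, rfl | rfl⟩) <;> norm_num⟩
  have hx : |x| ≤ 1 := (sq_le_one_iff_abs_le_one x).mp (by nlinarith [sq_nonneg y])
  have hy : |y| ≤ 1 := (sq_le_one_iff_abs_le_one y).mp (by nlinarith [sq_nonneg x])
  obtain ⟨hx₁, hx₂⟩ := abs_le.mp hx
  obtain ⟨hy₁, hy₂⟩ := abs_le.mp hy
  interval_cases x <;> interval_cases y <;> simp_all

lemma FiberConn.symm {L : LatticeLink} {v : ℤ × ℤ} {h h' : ℤ} (hc : FiberConn L v h h') :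
    FiberConn L v h' h :=
  haveI : Std.Symm fun a b => L.Adj (v, a) (v, b) := ⟨fun _ _ => L.symm _ _⟩
  Std.Symm.symm (r := Relation.ReflTransGen fun a b => L.Adj (v, a) (v, b)) _ _ hc

namespace LatticeDiagram

variable {D : LatticeDiagram} {ht : Sym2 (ℤ × ℤ) → ℤ} {a b c r x₁ x₂ y₁ y₂ : ℤ × ℤ}
  {z h h' : ℤ}

lemma ne_of_adj (hab : D.Adj a b) : a ≠ b := by
  rintro rfl
  simpa using D.unit a a hab

lemma eq_or_eq_or_eq_or_eq_of_adj (hab : D.Adj a b) :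
    b = (a.1 + 1, a.2) ∨ b = (a.1 - 1, a.2) ∨ b = (a.1, a.2 + 1) ∨ b = (a.1, a.2 - 1) := by
  obtain ⟨b₁, b₂⟩ := b
  have := Int.sq_add_sq_eq_one_iff.mp (D.unit _ _ hab)
  simp only [Prod.ext_iff]
  omega

lemma adj_iff_of_isCrossing (hc : D.IsCrossing a) (r : ℤ × ℤ) :
    D.Adj a r ↔ r = (a.1 + 1, a.2) ∨ r = (a.1 - 1, a.2) ∨ r = (a.1, a.2 + 1) ∨
      r = (a.1, a.2 - 1) := by
  let N : Finset (ℤ × ℤ) := {(a.1 + 1, a.2), (a.1 - 1, a.2), (a.1, a.2 + 1), (a.1, a.2 - 1)}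
  have hsub : {r | D.Adj a r} ⊆ N := fun r hr => by
    simpa [N] using D.eq_or_eq_or_eq_or_eq_of_adj hr
  have heq : {r | D.Adj a r} = N := by
    refine Set.eq_of_subset_of_ncard_le hsub ?_ (Finset.finite_toSet N)
    rw [Set.ncard_coe_finset, show {r | D.Adj a r}.ncard = 4 from hc]
    exact Finset.card_le_four
  simpa [N] using Set.ext_iff.mp heq r

lemma underAt_or_overAt (hab : D.Adj a b) : D.UnderAt a b ∨ D.OverAt a b := by
  have := D.eq_or_eq_or_eq_or_eq_of_adj hab
  simp only [UnderAt, OverAt, hab, true_and]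
  cases D.horizOver a <;> rcases this with rfl | rfl | rfl | rfl <;> simp

lemma UnderAt.not_overAt (hu : D.UnderAt a b) : ¬ D.OverAt a b := by
  have hne := D.ne_of_adj hu.1
  obtain ⟨_, hu⟩ := hu
  rintro ⟨_, ho⟩
  obtain ⟨b₁, b₂⟩ := b
  rcases hu with ⟨h₁, h₂⟩ | ⟨h₁, h₂⟩ <;> rcases ho with ⟨h₃, h₄⟩ | ⟨h₃, h₄⟩ <;>
    simp_all [Prod.ext_iff]

lemma exists_underAt_overAt (hc : D.IsCrossing a) : ∃ b c, D.UnderAt a b ∧ D.OverAt a c := by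
  have hx := (D.adj_iff_of_isCrossing hc (a.1 + 1, a.2)).mpr (by simp)
  have hy := (D.adj_iff_of_isCrossing hc (a.1, a.2 + 1)).mpr (by simp)
  cases hv : D.horizOver a
  · exact ⟨_, _, ⟨hx, Or.inl ⟨rfl, hv⟩⟩, ⟨hy, Or.inr ⟨rfl, hv⟩⟩⟩
  · exact ⟨_, _, ⟨hy, Or.inr ⟨rfl, hv⟩⟩, ⟨hx, Or.inl ⟨rfl, hv⟩⟩⟩

variable (D) in
def OnOverstrand (a r : ℤ × ℤ) : Prop := D.IsCrossing a ∧ D.OverAt a r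

variable (D) in
/-- At a crossing the edges `a b` and `a c` are both understrand or both overstrand edges; at a
vertex of degree 2 there is only one strand, so any two edges at `a` qualify. -/
def SameStrand (a b c : ℤ × ℤ) : Prop :=
  D.Adj a b ∧ D.Adj a c ∧ (D.OnOverstrand a b ↔ D.OnOverstrand a c)

lemma SameStrand.symm (h : D.SameStrand a b c) : D.SameStrand a c b :=
  ⟨h.2.1, h.1, h.2.2.symm⟩

lemma SameStrand.trans (h : D.SameStrand a b c) (h' : D.SameStrand a c r) :
    D.SameStrand a b r :=
  ⟨h.1, h'.2.1, h.2.2.trans h'.2.2⟩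

lemma exists_sameStrand_iff (hab : D.Adj a b) :
    ∃ c, b ≠ c ∧ ∀ r, D.SameStrand a b r ↔ r = b ∨ r = c := by
  by_cases hc : D.IsCrossing a
  · refine ⟨(2 * a.1 - b.1, 2 * a.2 - b.2), ?_, fun r => ?_⟩
    · have := D.ne_of_adj hab
      simp only [ne_eq, Prod.ext_iff] at this ⊢
      omega
    · rw [adj_iff_of_isCrossing hc] at hab
      obtain ⟨r₁, r₂⟩ := r
      simp only [SameStrand, OnOverstrand, OverAt, adj_iff_of_isCrossing hc, hc, true_and]
      cases D.horizOver a <;> rcases hab with rfl | rfl | rfl | rfl <;> simp [Prod.ext_iff] <;>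
        omega
  · have hsame : ∀ r, D.SameStrand a b r ↔ D.Adj a r := fun r => by
      simp [SameStrand, OnOverstrand, hc, hab]
    obtain ⟨x, y, hxy, hN⟩ := Set.ncard_eq_two.mp ((D.deg a b hab).resolve_right hc)
    have hadj : ∀ r, D.Adj a r ↔ r = x ∨ r = y := fun r => by
      simpa using Set.ext_iff.mp hN r
    simp only [hsame, hadj] at hab ⊢
    rcases hab with rfl | rfl
    · exact ⟨y, hxy, fun r => Iff.rfl⟩
    · exact ⟨x, hxy.symm, fun r => Or.comm⟩

variable (D) in
def IsHeightFunction (ht : Sym2 (ℤ × ℤ) → ℤ) : Prop :=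
  ∀ e f, GammaEdge D e f → ht e < ht f

lemma ht_lt_of_onOverstrand (hht : D.IsHeightFunction ht) (hb : D.Adj a b)
    (hnb : ¬ D.OnOverstrand a b) (hc : D.OnOverstrand a c) : ht s(a, b) < ht s(a, c) := by
  obtain ⟨hcr, hco⟩ := hc
  have hbu : D.UnderAt a b := (D.underAt_or_overAt hb).resolve_right fun hbo => hnb ⟨hcr, hbo⟩
  exact hht _ _ ⟨a, b, c, hcr, hbu, hco, rfl, rfl⟩

variable (D ht) in
def IsStrand (a x₁ x₂ : ℤ × ℤ) : Prop :=
  x₁ ≠ x₂ ∧ ht s(a, x₁) ≤ ht s(a, x₂) ∧ ∀ r, D.SameStrand a x₁ r ↔ r = x₁ ∨ r = x₂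

variable (ht) in
lemma exists_isStrand (hab : D.Adj a b) :
    ∃ x₁ x₂, D.IsStrand ht a x₁ x₂ ∧ D.SameStrand a x₁ b := by
  obtain ⟨c, hne, hbc⟩ := D.exists_sameStrand_iff hab
  rcases le_total (ht s(a, b)) (ht s(a, c)) with hle | hle
  · exact ⟨b, c, ⟨hne, hle, hbc⟩, (hbc b).mpr (Or.inl rfl)⟩
  · have hcb : D.SameStrand a c b := ((hbc c).mpr (Or.inr rfl)).symm
    refine ⟨c, b, ⟨hne.symm, hle, fun r => ?_⟩, hcb⟩
    rw [← or_comm, ← hbc]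
    exact ⟨hcb.symm.trans, hcb.trans⟩

namespace IsStrand

lemma sameStrand_left (hs : D.IsStrand ht a x₁ x₂) : D.SameStrand a x₁ x₁ :=
  (hs.2.2 x₁).mpr (Or.inl rfl)

lemma sameStrand_right (hs : D.IsStrand ht a x₁ x₂) : D.SameStrand a x₁ x₂ :=
  (hs.2.2 x₂).mpr (Or.inr rfl)

lemma adj_left (hs : D.IsStrand ht a x₁ x₂) : D.Adj a x₁ :=
  hs.sameStrand_left.1

lemma adj_right (hs : D.IsStrand ht a x₁ x₂) : D.Adj a x₂ :=
  hs.sameStrand_right.2.1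

lemma ht_mem_Icc (hs : D.IsStrand ht a x₁ x₂) (hr : D.SameStrand a x₁ r) :
    ht s(a, x₁) ≤ ht s(a, r) ∧ ht s(a, r) ≤ ht s(a, x₂) := by
  have := hs.2.1
  rcases (hs.2.2 r).mp hr with rfl | rfl <;> exact ⟨by omega, by omega⟩

lemma ht_eq (hs : D.IsStrand ht a x₁ x₂) (hs' : D.IsStrand ht a y₁ y₂)
    (h : D.SameStrand a x₁ y₁) : ht s(a, x₁) = ht s(a, y₁) ∧ ht s(a, x₂) = ht s(a, y₂) := by
  have hy₂ := h.trans hs'.sameStrand_right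
  have := hs.2.1
  have := hs'.1
  have := hs'.2.1
  rcases (hs.2.2 _).mp h with rfl | rfl <;> rcases (hs.2.2 _).mp hy₂ with rfl | rfl <;>
    first | contradiction | omega

lemma lt_or_lt_of_not_sameStrand (hht : D.IsHeightFunction ht) (hs : D.IsStrand ht a x₁ x₂)
    (hr : D.Adj a r) (hn : ¬ D.SameStrand a x₁ r) :
    (D.OnOverstrand a x₁ ∧ ht s(a, r) < ht s(a, x₁)) ∨
      (¬ D.OnOverstrand a x₁ ∧ ht s(a, x₂) < ht s(a, r)) := by
  by_cases hx : D.OnOverstrand a x₁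
  · have hnr : ¬ D.OnOverstrand a r := fun hr' => hn ⟨hs.adj_left, hr, iff_of_true hx hr'⟩
    exact Or.inl ⟨hx, ht_lt_of_onOverstrand hht hr hnr hx⟩
  · have hr' : D.OnOverstrand a r := by_contra fun hr' => hn ⟨hs.adj_left, hr, iff_of_false hx hr'⟩
    exact Or.inr ⟨hx, ht_lt_of_onOverstrand hht hs.adj_right
      (hs.sameStrand_right.2.2.not.mp hx) hr'⟩

lemma eq_of_ht_mem_Icc (hht : D.IsHeightFunction ht) (hs : D.IsStrand ht a x₁ x₂)
    (hr : D.Adj a r) (h₁ : ht s(a, x₁) ≤ ht s(a, r)) (h₂ : ht s(a, r) ≤ ht s(a, x₂)) :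
    r = x₁ ∨ r = x₂ := by
  by_cases hsr : D.SameStrand a x₁ r
  · exact (hs.2.2 r).mp hsr
  · rcases hs.lt_or_lt_of_not_sameStrand hht hr hsr with ⟨-, h⟩ | ⟨-, h⟩ <;> omega

end IsStrand

variable (D ht) in
def LiftVert (a : ℤ × ℤ) (z : ℤ) : Prop :=
  ∃ b c, D.SameStrand a b c ∧ ht s(a, b) ≤ z ∧ z < ht s(a, c)

variable (D ht) in
def LiftAdj (p q : (ℤ × ℤ) × ℤ) : Prop :=
  (D.Adj p.1 q.1 ∧ q.2 = p.2 ∧ ht s(p.1, q.1) = p.2) ∨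
    (q = (p.1, p.2 + 1) ∧ D.LiftVert ht p.1 p.2) ∨
    (q = (p.1, p.2 - 1) ∧ D.LiftVert ht p.1 (p.2 - 1))

lemma liftAdj_symm {p q : (ℤ × ℤ) × ℤ} (hpq : D.LiftAdj ht p q) : D.LiftAdj ht q p := by
  obtain ⟨a, z⟩ := p
  rcases hpq with ⟨hadj, hz, hh⟩ | ⟨rfl, hv⟩ | ⟨rfl, hv⟩
  · exact Or.inl ⟨D.symm _ _ hadj, hz.symm, by rw [Sym2.eq_swap]; omega⟩
  · exact Or.inr (Or.inr ⟨by simp, by simpa using hv⟩)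
  · exact Or.inr (Or.inl ⟨by simp, by simpa using hv⟩)

lemma liftAdj_unit {p q : (ℤ × ℤ) × ℤ} (hpq : D.LiftAdj ht p q) :
    (p.1.1 - q.1.1) ^ 2 + (p.1.2 - q.1.2) ^ 2 + (p.2 - q.2) ^ 2 = 1 := by
  rcases hpq with ⟨hadj, hz, -⟩ | ⟨rfl, -⟩ | ⟨rfl, -⟩
  · simpa [hz] using D.unit _ _ hadj
  · simp
  · simp

lemma exists_isStrand_of_liftVert (hv : D.LiftVert ht a z) :
    ∃ x₁ x₂, D.IsStrand ht a x₁ x₂ ∧ ht s(a, x₁) ≤ z ∧ z < ht s(a, x₂) := by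
  obtain ⟨b, c, hbc, hb, hc⟩ := hv
  obtain ⟨x₁, x₂, hs, hx⟩ := D.exists_isStrand ht hbc.1
  have := hs.ht_mem_Icc hx
  have := hs.ht_mem_Icc (hx.trans hbc)
  exact ⟨x₁, x₂, hs, by omega, by omega⟩

lemma exists_isStrand_of_liftAdj {q : (ℤ × ℤ) × ℤ} (hq : D.LiftAdj ht (a, h) q) :
    ∃ x₁ x₂, D.IsStrand ht a x₁ x₂ ∧ ht s(a, x₁) ≤ h ∧ h ≤ ht s(a, x₂) := by
  dsimp only [LiftAdj] at hq
  rcases hq with ⟨hadj, -, hh⟩ | ⟨-, hv⟩ | ⟨-, hv⟩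
  · obtain ⟨x₁, x₂, hs, hx⟩ := D.exists_isStrand ht hadj
    have := hs.ht_mem_Icc hx
    exact ⟨x₁, x₂, hs, by omega, by omega⟩
  all_goals
    obtain ⟨x₁, x₂, hs, h₁, h₂⟩ := exists_isStrand_of_liftVert hv
    exact ⟨x₁, x₂, hs, by omega, by omega⟩

namespace IsStrand

lemma liftVert (hs : D.IsStrand ht a x₁ x₂) (h₁ : ht s(a, x₁) ≤ z) (h₂ : z < ht s(a, x₂)) :
    D.LiftVert ht a z :=
  ⟨x₁, x₂, hs.sameStrand_right, h₁, h₂⟩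

variable (hht : D.IsHeightFunction ht) (hs : D.IsStrand ht a x₁ x₂)
include hht hs

lemma liftVert_trichotomy (hv : D.LiftVert ht a z) :
    (ht s(a, x₁) ≤ z ∧ z < ht s(a, x₂)) ∨ z + 1 < ht s(a, x₁) ∨ ht s(a, x₂) < z := by
  obtain ⟨b, c, hbc, hb, hc⟩ := hv
  by_cases hxb : D.SameStrand a x₁ b
  · have := hs.ht_mem_Icc hxb
    have := hs.ht_mem_Icc (hxb.trans hbc)
    omega
  · have hxc : ¬ D.SameStrand a x₁ c := fun hxc => hxb (hxc.trans hbc.symm)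
    rcases hs.lt_or_lt_of_not_sameStrand hht hbc.1 hxb with ⟨hx, hb'⟩ | ⟨hx, hb'⟩ <;>
      rcases hs.lt_or_lt_of_not_sameStrand hht hbc.2.1 hxc with ⟨hx', hc'⟩ | ⟨hx', hc'⟩ <;>
      first | contradiction | omega

lemma liftVert_iff (h₁ : ht s(a, x₁) - 1 ≤ z) (h₂ : z ≤ ht s(a, x₂)) :
    D.LiftVert ht a z ↔ ht s(a, x₁) ≤ z ∧ z < ht s(a, x₂) := by
  refine ⟨fun hv => ?_, fun hz => hs.liftVert hz.1 hz.2⟩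
  have := hs.liftVert_trichotomy hht hv
  omega

lemma ncard_liftAdj (h₁ : ht s(a, x₁) ≤ h) (h₂ : h ≤ ht s(a, x₂)) :
    {q | D.LiftAdj ht (a, h) q}.ncard = 2 := by
  have hup := hs.liftVert_iff hht (z := h) (by omega) h₂
  have hdown := hs.liftVert_iff hht (z := h - 1) (by omega) (by omega)
  have hhor : ∀ r, D.Adj a r → ht s(a, r) = h → r = x₁ ∨ r = x₂ := fun r hr hrh =>
    hs.eq_of_ht_mem_Icc hht hr (by omega) (by omega)
  have hx₁ := hs.adj_left
  have hx₂ := hs.adj_right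
  have hne := hs.1
  rw [Set.ncard_eq_two]
  refine ⟨if ht s(a, x₁) = h then (x₁, h) else (a, h - 1),
    if ht s(a, x₂) = h then (x₂, h) else (a, h + 1), ?_, ?_⟩
  · split_ifs <;> simp [Prod.ext_iff, hne]; omega
  · ext ⟨r, z⟩
    simp only [Set.mem_ofPred_eq, LiftAdj, hup, hdown, Set.mem_insert_iff,
      Set.mem_singleton_iff]
    constructor
    · rintro (⟨hr, rfl, hrh⟩ | ⟨he, hz⟩ | ⟨he, hz⟩)
      · rcases hhor r hr hrh with rfl | rfl <;> split_ifs <;> simp_all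
      all_goals split_ifs <;> simp_all
    · split_ifs <;> rintro (he | he) <;> simp_all <;> omega

end IsStrand

def liftLink (hht : D.IsHeightFunction ht) : LatticeLink where
  Adj := D.LiftAdj ht
  symm _ _ := liftAdj_symm
  unit _ _ := liftAdj_unit
  deg2 := fun ⟨_, _⟩ _ hq => by
    obtain ⟨x₁, x₂, hs, h₁, h₂⟩ := exists_isStrand_of_liftAdj hq
    exact hs.ncard_liftAdj hht h₁ h₂

namespace IsStrand

variable (hht : D.IsHeightFunction ht) (hs : D.IsStrand ht a x₁ x₂)
include hht hs

lemma fiberConn_liftLink (h₁ : ht s(a, x₁) ≤ h) (h₂ : h ≤ ht s(a, x₂))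
    (h₁' : ht s(a, x₁) ≤ h') (h₂' : h' ≤ ht s(a, x₂)) : FiberConn (liftLink hht) a h h' := by
  suffices H : ∀ h, ht s(a, x₁) ≤ h → h ≤ ht s(a, x₂) →
      FiberConn (liftLink hht) a (ht s(a, x₁)) h from
    (H h h₁ h₂).symm.trans (H h' h₁' h₂')
  intro h hh
  induction h, hh using Int.leInduction with
  | base => exact fun _ => .refl
  | succ k hk ih =>
    exact fun hk' => (ih (by omega)).tail (Or.inr (Or.inl ⟨rfl, hs.liftVert hk (by omega)⟩))

lemma mem_Icc_of_fiberConn_liftLink (hc : FiberConn (liftLink hht) a h h')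
    (h₁ : ht s(a, x₁) ≤ h) (h₂ : h ≤ ht s(a, x₂)) : ht s(a, x₁) ≤ h' ∧ h' ≤ ht s(a, x₂) := by
  induction hc with
  | refl => exact ⟨h₁, h₂⟩
  | tail _ hstep ih =>
    rcases hstep with ⟨hadj, -, -⟩ | ⟨he, hv⟩ | ⟨he, hv⟩
    · exact absurd rfl (D.ne_of_adj hadj)
    all_goals
      have := hs.liftVert_trichotomy hht hv
      simp only [Prod.ext_iff] at he
      omega

end IsStrand

variable (hht : D.IsHeightFunction ht)
include hht

lemma fiberConn_liftLink_of_not_isCrossing (hnc : ¬ D.IsCrossing a)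
    (hv : (liftLink hht).Vtx (a, h)) (hv' : (liftLink hht).Vtx (a, h')) :
    FiberConn (liftLink hht) a h h' := by
  obtain ⟨x₁, x₂, hs, h₁, h₂⟩ := exists_isStrand_of_liftAdj hv.choose_spec
  obtain ⟨y₁, y₂, hs', h₁', h₂'⟩ := exists_isStrand_of_liftAdj hv'.choose_spec
  have hxy : D.SameStrand a x₁ y₁ :=
    ⟨hs.adj_left, hs'.adj_left, iff_of_false (hnc ·.1) (hnc ·.1)⟩
  obtain ⟨e₁, e₂⟩ := hs.ht_eq hs' hxy
  exact hs.fiberConn_liftLink hht h₁ h₂ (by omega) (by omega)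

lemma exists_isStrand_under_isStrand_over (hcr : D.IsCrossing a) :
    ∃ u₁ u₂ o₁ o₂, D.IsStrand ht a u₁ u₂ ∧ D.IsStrand ht a o₁ o₂ ∧
      ht s(a, u₂) < ht s(a, o₁) ∧
      (∀ r, D.Adj a r → ¬ D.OnOverstrand a r → D.SameStrand a u₁ r) ∧
      (∀ r, D.Adj a r → D.OnOverstrand a r → D.SameStrand a o₁ r) := by
  obtain ⟨b, c, hb, hc⟩ := D.exists_underAt_overAt hcr
  obtain ⟨u₁, u₂, hu, hub⟩ := D.exists_isStrand ht hb.1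
  obtain ⟨o₁, o₂, ho, hoc⟩ := D.exists_isStrand ht hc.1
  have hbO : ¬ D.OnOverstrand a b := fun h => hb.not_overAt h.2
  have hcO : D.OnOverstrand a c := ⟨hcr, hc⟩
  refine ⟨u₁, u₂, o₁, o₂, hu, ho, ?_, fun r hr hrO => hub.trans ⟨hb.1, hr, iff_of_false hbO hrO⟩,
    fun r hr hrO => hoc.trans ⟨hc.1, hr, iff_of_true hcO hrO⟩⟩
  exact ht_lt_of_onOverstrand hht hu.adj_right
    ((hub.symm.trans hu.sameStrand_right).2.2.not.mp hbO) (hoc.2.2.mpr hcO)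

lemma exists_fiber_components_liftLink (hcr : D.IsCrossing a) : ∃ hu ho : ℤ,
    (liftLink hht).Vtx (a, hu) ∧ (liftLink hht).Vtx (a, ho) ∧
    ¬ FiberConn (liftLink hht) a hu ho ∧
    (∀ h, (liftLink hht).Vtx (a, h) →
      FiberConn (liftLink hht) a h hu ∨ FiberConn (liftLink hht) a h ho) ∧
    (∀ h h', FiberConn (liftLink hht) a hu h → FiberConn (liftLink hht) a ho h' → h < h') ∧
    (∀ (p : ℤ × ℤ) (h : ℤ), (liftLink hht).Adj (a, h) (p, h) →
      (D.OverAt a p → FiberConn (liftLink hht) a h ho) ∧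
      (D.UnderAt a p → FiberConn (liftLink hht) a h hu)) := by
  obtain ⟨u₁, u₂, o₁, o₂, hu, ho, hgap, under_strand, over_strand⟩ :=
    exists_isStrand_under_isStrand_over hht hcr
  have hu_le := hu.2.1
  have ho_le := ho.2.1
  refine ⟨ht s(a, u₁), ht s(a, o₁), ⟨(u₁, _), Or.inl ⟨hu.adj_left, rfl, rfl⟩⟩,
    ⟨(o₁, _), Or.inl ⟨ho.adj_left, rfl, rfl⟩⟩, fun hconn => ?_, fun h hv => ?_,
    fun h h' hh hh' => ?_, fun p h hp => ?_⟩
  · have := hu.mem_Icc_of_fiberConn_liftLink hht hconn le_rfl hu_le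
    omega
  · obtain ⟨x₁, x₂, hs, h₁, h₂⟩ := exists_isStrand_of_liftAdj hv.choose_spec
    by_cases hx : D.OnOverstrand a x₁
    · obtain ⟨e₁, e₂⟩ := ho.ht_eq hs (over_strand x₁ hs.adj_left hx)
      exact Or.inr (ho.fiberConn_liftLink hht (by omega) (by omega) le_rfl ho_le)
    · obtain ⟨e₁, e₂⟩ := hu.ht_eq hs (under_strand x₁ hs.adj_left hx)
      exact Or.inl (hu.fiberConn_liftLink hht (by omega) (by omega) le_rfl hu_le)
  · have := hu.mem_Icc_of_fiberConn_liftLink hht hh le_rfl hu_le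
    have := ho.mem_Icc_of_fiberConn_liftLink hht hh' le_rfl ho_le
    omega
  · rcases hp with ⟨hadj, -, hph⟩ | ⟨he, -⟩ | ⟨he, -⟩
    · dsimp only at hadj hph
      refine ⟨fun hpo => ?_, fun hpu => ?_⟩
      · have := ho.ht_mem_Icc (over_strand p hadj ⟨hcr, hpo⟩)
        exact ho.fiberConn_liftLink hht (by omega) (by omega) le_rfl ho_le
      · have := hu.ht_mem_Icc (under_strand p hadj fun h => hpu.not_overAt h.2)
        exact hu.fiberConn_liftLink hht (by omega) (by omega) le_rfl hu_le
    all_goals simp only [Prod.ext_iff] at he; omega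

lemma realizes_liftLink : Realizes D (liftLink hht) := by
  refine ⟨fun p q hpq => ?_, fun a b hab => ?_, fun v ⟨_, _⟩ hnc _ _ =>
    fiberConn_liftLink_of_not_isCrossing hht hnc, fun v hcr =>
    exists_fiber_components_liftLink hht hcr⟩
  · rcases hpq with ⟨hadj, -, -⟩ | ⟨rfl, b, _, hbc, -⟩ | ⟨rfl, b, _, hbc, -⟩
    · exact Or.inr hadj
    all_goals exact Or.inl ⟨rfl, b, hbc.1⟩
  · refine ⟨ht s(a, b), Or.inl ⟨hab, rfl, rfl⟩, ?_⟩
    rintro z (⟨-, -, hz⟩ | ⟨he, -⟩ | ⟨he, -⟩)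
    · exact hz.symm
    all_goals exact absurd (congrArg Prod.fst he) (D.ne_of_adj hab).symm

end LatticeDiagram

namespace LatticeLink

open Classical in
noncomputable def edgeHeight (L : LatticeLink) (e : Sym2 (ℤ × ℤ)) : ℤ :=
  if h : ∃ z a b, e = s(a, b) ∧ L.Adj (a, z) (b, z) then h.choose else 0

lemma adj_edgeHeight (L : LatticeLink) {a b : ℤ × ℤ} {z : ℤ} (h : L.Adj (a, z) (b, z)) :
    L.Adj (a, L.edgeHeight s(a, b)) (b, L.edgeHeight s(a, b)) := by
  have hex : ∃ z a' b', s(a, b) = s(a', b') ∧ L.Adj (a', z) (b', z) := ⟨z, a, b, rfl, h⟩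
  rw [edgeHeight, dif_pos hex]
  obtain ⟨a', b', he, hadj⟩ := hex.choose_spec
  rcases Sym2.eq_iff.mp he with ⟨rfl, rfl⟩ | ⟨rfl, rfl⟩
  · exact hadj
  · exact L.symm _ _ hadj

end LatticeLink

lemma Realizes.isHeightFunction_edgeHeight {D : LatticeDiagram} {L : LatticeLink}
    (hL : Realizes D L) : D.IsHeightFunction L.edgeHeight := by
  rintro _ _ ⟨v, p, q, hcr, hp, hq, rfl, rfl⟩
  obtain ⟨-, hlift, -, hcross⟩ := hL
  obtain ⟨_, _, -, -, -, -, hlt, hattach⟩ := hcross v hcr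
  have hp' := L.adj_edgeHeight (hlift v p hp.1).exists.choose_spec
  have hq' := L.adj_edgeHeight (hlift v q hq.1).exists.choose_spec
  exact hlt _ _ ((hattach p _ hp').2 hp).symm ((hattach q _ hq').1 hq).symm

/-- A lattice diagram is realizable as the projection of a lattice link iff
its associated digraph admits a height function. -/
theorem stmt_12 (D : LatticeDiagram) :
    Realizable D ↔
      ∃ ht : Sym2 (ℤ × ℤ) → ℤ, ∀ e f, GammaEdge D e f → ht e < ht f :=
  ⟨fun ⟨L, hL⟩ => ⟨L.edgeHeight, hL.isHeightFunction_edgeHeight⟩,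
    fun ⟨_, hht⟩ => ⟨LatticeDiagram.liftLink hht, LatticeDiagram.realizes_liftLink hht⟩⟩
end
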